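/- For all natural numbers k ≥ 1, N and r ≥ 1 there exists a natural number N̄ such that for every coloring c : FIN_{k+1}(N̄) → {0,…,r−1} there exists a block sequence h = (h_i)_{i<N} of length N of elements of FIN_{k+1}(N̄) with the following property: for all exponents s_0,…,s_{N−1}, t_0,…,t_{N−1} ∈ {0,…,k+1}, if f = Σ_{i<N} T^{k+1−s_i}(h_i) and g = Σ_{i<N} T^{k+1−t_i}(h_i) both belong to FIN_{k+1} and for every i < N one has s_i = k+1 if and only if t_i = k+1, then c(f) = c(g). -/

import Mathlib

/-- `f` is a member of `FIN_k`: finitely supported `ℕ`-valued function with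
values `≤ k` that attains the value `k`. -/
def IsFINk (k : ℕ) (f : ℕ →₀ ℕ) : Prop :=
  (∀ n, f n ≤ k) ∧ (∃ n, f n = k)

/-- `FIN_k(N)`: the members of `FIN_k` supported inside `{0, …, N-1}`. -/
def FINkN (k N : ℕ) : Set (ℕ →₀ ℕ) :=
  {f | IsFINk k f ∧ ∀ n ∈ f.support, n < N}

/-- The block relation `f < g`: the support of `f` lies entirely below the support of `g`. -/
def Blk (f g : ℕ →₀ ℕ) : Prop :=
  ∀ i ∈ f.support, ∀ j ∈ g.support, i < j

/-- The Tetris operation `(T f)(x) = max {0, f x - 1}`. -/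
noncomputable def Tetris (f : ℕ →₀ ℕ) : ℕ →₀ ℕ :=
  Finsupp.mapRange (· - 1) (by simp) f

/-- `(F i)_{i<m}` is a block sequence of length `m`. -/
def IsBlockSeqFin (m : ℕ) (F : ℕ → (ℕ →₀ ℕ)) : Prop :=
  ∀ i j : ℕ, i < j → j < m → Blk (F i) (F j)

/-- `(G i)_{i<d}` is a block sequence (a `d`-tuple version). -/
def IsBlockTuple (d : ℕ) (G : Fin d → (ℕ →₀ ℕ)) : Prop :=
  ∀ i j : Fin d, i < j → Blk (G i) (G j)

/-- The combinatorial space `⟨F i⟩_{i<m}` generated by a block sequence `(F i)_{i<m}`: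
all sums `T^{l_1}(f_{i_1}) + … + T^{l_p}(f_{i_p})` with `i_1 < … < i_p < m` and
`min {l_1, …, l_p} = 0`. -/
def CombSpace (m : ℕ) (F : ℕ → (ℕ →₀ ℕ)) : Set (ℕ →₀ ℕ) :=
  {g | ∃ (s : Finset ℕ) (l : ℕ → ℕ), s.Nonempty ∧ (∀ i ∈ s, i < m) ∧
      (∃ i ∈ s, l i = 0) ∧ g = ∑ i ∈ s, Tetris^[l i] (F i)}

/-!
A finite form of Gowers' `FIN_k` theorem, proved with idempotent ultrafilters. In the semigroup of
ultrafilters on `ℕ →₀ ℕ` there are cofinal ultrafilters `U 0 = pure 0, U 1, …, U K`, with `U j`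
living on `FIN_j`, such that `T (U j) = U (j - 1)` and `U i + U j = U (max i j)`. For a finite
colouring `c`, each `U m` picks a colour `E m`. Blocks `h i` chosen greedily, each `U K`-typical,
then give every sum `Σ T^{K - s i} (h i)` the colour `E (max s i)`, so all elements of `FIN_K`
spanned by the blocks share the colour `E K`. Letting colourings converge along an ultrafilter
on `ℕ` turns this into a bound `N̄` that works for every colouring at once.
-/

open Filter Finset

attribute [local instance] Ultrafilter.add Ultrafilter.addSemigroup

lemma Finsupp.eq_zero_or_eq_zero_of_disjoint_support {α M : Type*} [Zero M] {f g : α →₀ M}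
    (h : Disjoint f.support g.support) (x : α) : f x = 0 ∨ g x = 0 := by
  by_contra! hx
  exact Finset.disjoint_left.1 h (Finsupp.mem_support_iff.2 hx.1) (Finsupp.mem_support_iff.2 hx.2)

lemma exists_support_subset_range {M : Type*} [Zero M] (h : ℕ → ℕ →₀ M) (n : ℕ) :
    ∃ b, ∀ i < n, (h i).support ⊆ range b := by
  obtain ⟨b, hb⟩ := Finset.exists_nat_subset_range ((range n).biUnion fun i => (h i).support)
  exact ⟨b, fun i hi => (Finset.subset_biUnion_of_mem _ (mem_range.2 hi)).trans hb⟩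

lemma tetris_apply (f : ℕ →₀ ℕ) (x : ℕ) : Tetris f x = f x - 1 :=
  Finsupp.mapRange_apply

lemma iterate_tetris_apply (l : ℕ) (f : ℕ →₀ ℕ) (x : ℕ) : Tetris^[l] f x = f x - l := by
  induction l generalizing f with
  | zero => rfl
  | succ l ih => rw [Function.iterate_succ_apply, ih, tetris_apply]; omega

lemma tetris_add {f g : ℕ →₀ ℕ} (h : Disjoint f.support g.support) :
    Tetris (f + g) = Tetris f + Tetris g := by
  ext x
  simp only [Finsupp.add_apply, tetris_apply]
  rcases Finsupp.eq_zero_or_eq_zero_of_disjoint_support h x with hx | hx <;> omega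

lemma eq_zero_of_isFINk_zero {f : ℕ →₀ ℕ} (hf : IsFINk 0 f) : f = 0 := by
  ext x
  exact Nat.le_zero.1 (hf.1 x)

lemma IsFINk.tetris {a : ℕ} {f : ℕ →₀ ℕ} (hf : IsFINk (a + 1) f) : IsFINk a (Tetris f) := by
  obtain ⟨x, hx⟩ := hf.2
  exact ⟨fun y => by rw [tetris_apply]; have := hf.1 y; omega, x, by rw [tetris_apply, hx]; rfl⟩

lemma IsFINk.add {a b : ℕ} {f g : ℕ →₀ ℕ} (hf : IsFINk a f) (hg : IsFINk b g)
    (hfg : Disjoint f.support g.support) : IsFINk (max a b) (f + g) := by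
  have hdisj := Finsupp.eq_zero_or_eq_zero_of_disjoint_support hfg
  refine ⟨fun x => ?_, ?_⟩
  · have := hf.1 x; have := hg.1 x; have := hdisj x
    simp only [Finsupp.add_apply]; omega
  · rcases le_total a b with hab | hab
    · obtain ⟨x, hx⟩ := hg.2
      exact ⟨x, by have := hf.1 x; have := hdisj x; simp only [Finsupp.add_apply]; omega⟩
    · obtain ⟨x, hx⟩ := hf.2
      exact ⟨x, by have := hg.1 x; have := hdisj x; simp only [Finsupp.add_apply]; omega⟩

noncomputable def tetrisSection (f : ℕ →₀ ℕ) : ℕ →₀ ℕ :=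
  Finsupp.mapRange (fun v => if v = 0 then 0 else v + 1) (by simp) f

lemma tetrisSection_apply (f : ℕ →₀ ℕ) (x : ℕ) :
    tetrisSection f x = if f x = 0 then 0 else f x + 1 :=
  Finsupp.mapRange_apply

lemma tetris_tetrisSection (f : ℕ →₀ ℕ) : Tetris (tetrisSection f) = f := by
  ext x
  rw [tetris_apply, tetrisSection_apply]
  split <;> omega

lemma support_tetrisSection (f : ℕ →₀ ℕ) : (tetrisSection f).support = f.support := by
  ext x
  simp only [Finsupp.mem_support_iff, tetrisSection_apply]
  split <;> omega

lemma IsFINk.tetrisSection {a : ℕ} {f : ℕ →₀ ℕ} (ha : a ≠ 0) (hf : IsFINk a f) :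
    IsFINk (a + 1) (tetrisSection f) := by
  obtain ⟨x, hx⟩ := hf.2
  refine ⟨fun y => ?_, x, ?_⟩
  · rw [tetrisSection_apply]; have := hf.1 y; split <;> omega
  · rw [tetrisSection_apply, hx, if_neg ha]

lemma continuous_ultrafilter_map {α β : Type*} (f : α → β) : Continuous (Ultrafilter.map f) :=
  ultrafilterBasis_is_basis.continuous_iff.2 <| Set.forall_mem_range.mpr fun s =>
    ultrafilter_isOpen_basic (f ⁻¹' s)

lemma Ultrafilter.exists_eventually_eq {α β : Type*} [Finite α] (U : Ultrafilter β) (c : β → α) :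
    ∃ a, ∀ᶠ x in U, c x = a := by
  obtain ⟨a, ha⟩ := (U.map c).eq_pure_of_finite
  refine ⟨a, ?_⟩
  have : ∀ᶠ v in (U.map c : Filter α), v = a := by rw [ha]; exact eventually_pure.2 rfl
  exact this

def IsCofinalFinsupp (U : Ultrafilter (ℕ →₀ ℕ)) : Prop :=
  ∀ n : ℕ, ∀ᶠ f : ℕ →₀ ℕ in U, ∀ x ∈ f.support, n ≤ x

lemma IsCofinalFinsupp.eventually_disjoint {V : Ultrafilter (ℕ →₀ ℕ)} (hV : IsCofinalFinsupp V)
    (f : ℕ →₀ ℕ) : ∀ᶠ g : ℕ →₀ ℕ in V, Disjoint f.support g.support := by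
  obtain ⟨n, hn⟩ := Finset.exists_nat_subset_range f.support
  filter_upwards [hV n] with g hg
  exact Finset.disjoint_left.2 fun x hxf hxg => by
    have := mem_range.1 (hn hxf); have := hg x hxg; omega

lemma IsCofinalFinsupp.add {U V : Ultrafilter (ℕ →₀ ℕ)} (hU : IsCofinalFinsupp U)
    (hV : IsCofinalFinsupp V) : IsCofinalFinsupp (U + V) := fun n => by
  rw [Ultrafilter.eventually_add]
  filter_upwards [hU n] with f hf
  filter_upwards [hV n] with g hg x hx
  rcases Finset.mem_union.1 (Finsupp.support_add hx) with hx | hx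
  exacts [hf x hx, hg x hx]

lemma map_tetris_add {U V : Ultrafilter (ℕ →₀ ℕ)} (hV : IsCofinalFinsupp V) :
    (U + V).map Tetris = U.map Tetris + V.map Tetris := by
  refine Ultrafilter.coe_inj.mp <| Filter.ext' fun p => ?_
  simp only [Ultrafilter.eventually_add, Ultrafilter.coe_map, eventually_map]
  refine eventually_congr (Eventually.of_forall fun f => eventually_congr ?_)
  filter_upwards [IsCofinalFinsupp.eventually_disjoint hV f] with g hfg
  rw [tetris_add hfg]

def cofinalFIN (j : ℕ) : Set (Ultrafilter (ℕ →₀ ℕ)) :=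
  {U | (∀ᶠ f in U, IsFINk j f) ∧ IsCofinalFinsupp U}

lemma isClosed_cofinalFIN (j : ℕ) : IsClosed (cofinalFIN j) := by
  have : {U | IsCofinalFinsupp U} =
      ⋂ n : ℕ, {U | {f : ℕ →₀ ℕ | ∀ x ∈ f.support, n ≤ x} ∈ U} := by
    ext; simp only [Set.mem_iInter]; rfl
  refine (ultrafilter_isClosed_basic _).inter (?_ : IsClosed {U | IsCofinalFinsupp U})
  exact this ▸ isClosed_iInter fun n => ultrafilter_isClosed_basic _

lemma cofinalFIN_nonempty (j : ℕ) : (cofinalFIN j).Nonempty := by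
  refine ⟨(hyperfilter ℕ).map fun n => Finsupp.single n j, Ultrafilter.mem_map.2 ?_,
    fun m => Ultrafilter.mem_map.2 ?_⟩
  · refine univ_mem' fun n => ⟨fun x => ?_, n, by simp⟩
    rw [Finsupp.single_apply]; split <;> omega
  · filter_upwards [Nat.hyperfilter_le_atTop (eventually_ge_atTop m)] with n hn x hx
    rwa [Finset.mem_singleton.1 (Finsupp.support_single_subset hx)]

lemma pure_zero_mem_cofinalFIN_zero : pure 0 ∈ cofinalFIN 0 :=
  ⟨eventually_pure.2 ⟨fun _ => le_rfl, 0, rfl⟩, fun _ => eventually_pure.2 (by simp)⟩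

lemma eq_pure_zero_of_mem_cofinalFIN_zero {U : Ultrafilter (ℕ →₀ ℕ)} (hU : U ∈ cofinalFIN 0) :
    U = pure 0 := by
  have : {0} ∈ U := by
    filter_upwards [hU.1] with f hf using eq_zero_of_isFINk_zero hf
  obtain ⟨x, hx, rfl⟩ := Ultrafilter.eq_pure_of_finite_mem (Set.finite_singleton 0) this
  rw [Set.mem_singleton_iff.1 hx]

lemma add_mem_cofinalFIN {a b : ℕ} {U V : Ultrafilter (ℕ →₀ ℕ)} (hU : U ∈ cofinalFIN a)
    (hV : V ∈ cofinalFIN b) : U + V ∈ cofinalFIN (max a b) := by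
  refine ⟨?_, hU.2.add hV.2⟩
  rw [Ultrafilter.eventually_add]
  filter_upwards [hU.1] with f hf
  filter_upwards [hV.1, IsCofinalFinsupp.eventually_disjoint hV.2 f] with g hg hfg
  exact hf.add hg hfg

lemma map_tetris_mem_cofinalFIN {j : ℕ} {U : Ultrafilter (ℕ →₀ ℕ)} (hU : U ∈ cofinalFIN (j + 1)) :
    U.map Tetris ∈ cofinalFIN j := by
  refine ⟨Ultrafilter.mem_map.2 ?_, fun n => Ultrafilter.mem_map.2 ?_⟩
  · filter_upwards [hU.1] with f hf using hf.tetris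
  · filter_upwards [hU.2 n] with f hf x hx using hf x (Finsupp.support_mapRange hx)

lemma exists_map_tetris_eq {K : ℕ} {W : Ultrafilter (ℕ →₀ ℕ)} (hW : W ∈ cofinalFIN K) :
    ∃ V ∈ cofinalFIN (K + 1), V.map Tetris = W := by
  rcases eq_or_ne K 0 with rfl | hK
  · obtain ⟨V, hV⟩ := cofinalFIN_nonempty 1
    refine ⟨V, hV, ?_⟩
    rw [eq_pure_zero_of_mem_cofinalFIN_zero (map_tetris_mem_cofinalFIN hV),
      eq_pure_zero_of_mem_cofinalFIN_zero hW]
  · refine ⟨W.map tetrisSection, ⟨Ultrafilter.mem_map.2 ?_, fun n => Ultrafilter.mem_map.2 ?_⟩, ?_⟩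
    · filter_upwards [hW.1] with f hf using hf.tetrisSection hK
    · filter_upwards [hW.2 n] with f hf x hx using hf x (by rwa [support_tetrisSection] at hx)
    · rw [Ultrafilter.map_map, show Tetris ∘ tetrisSection = id from funext tetris_tetrisSection,
        Ultrafilter.map_id]

structure IsTetrisChain (K : ℕ) (U : ℕ → Ultrafilter (ℕ →₀ ℕ)) : Prop where
  mem : ∀ j ≤ K, U j ∈ cofinalFIN j
  /-- At `j = 0` (truncated subtraction) this reads `T (U 0) = U 0`, true as `U 0 = pure 0`. -/
  map_tetris : ∀ j ≤ K, (U j).map Tetris = U (j - 1)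
  add_eq : ∀ i ≤ K, ∀ j ≤ K, U i + U j = U (max i j)

namespace IsTetrisChain

variable {K : ℕ} {U : ℕ → Ultrafilter (ℕ →₀ ℕ)}

lemma zero_eq (hU : IsTetrisChain K U) : U 0 = pure 0 :=
  eq_pure_zero_of_mem_cofinalFIN_zero (hU.mem 0 K.zero_le)

lemma map_iterate_tetris (hU : IsTetrisChain K U) {ℓ : ℕ} (hℓ : ℓ ≤ K) :
    (U K).map Tetris^[K - ℓ] = U ℓ := by
  suffices ∀ d ≤ K, (U K).map Tetris^[d] = U (K - d) by
    rw [this _ (Nat.sub_le K ℓ), Nat.sub_sub_self hℓ]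
  intro d hd
  induction d with
  | zero => exact Ultrafilter.map_id _
  | succ d ih =>
    rw [Function.iterate_succ', ← Ultrafilter.map_map, ih (by omega),
      hU.map_tetris _ (by omega), Nat.sub_sub]

lemma exists_idempotent_map_tetris_eq (hU : IsTetrisChain K U) :
    ∃ V ∈ cofinalFIN (K + 1), V.map Tetris = U K ∧ V + U K = V ∧ V + V = V := by
  have hW := hU.mem K le_rfl
  have hWW : U K + U K = U K := by simpa using hU.add_eq K le_rfl K le_rfl
  have hWTW : U K + (U K).map Tetris = U K := by
    simpa [hU.map_tetris K le_rfl] using hU.add_eq K le_rfl (K - 1) (Nat.sub_le K 1)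
  set S := {V | V ∈ cofinalFIN (K + 1) ∧ V.map Tetris = U K ∧ V + U K = V}
  have hS : IsClosed S :=
    (isClosed_cofinalFIN _).inter
      ((isClosed_singleton.preimage (continuous_ultrafilter_map _)).inter
        (isClosed_eq (Ultrafilter.continuous_add_left _) continuous_id))
  have hS_ne : S.Nonempty := by
    obtain ⟨V, hV, hVW⟩ := exists_map_tetris_eq hW
    refine ⟨V + U K, by simpa using add_mem_cofinalFIN hV hW, ?_, by rw [add_assoc, hWW]⟩
    rw [map_tetris_add hW.2, hVW, hWTW]
  have hS_add : ∀ V ∈ S, ∀ V' ∈ S, V + V' ∈ S := by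
    rintro V ⟨hV, hVW, -⟩ V' ⟨hV', hV'W, hV'U⟩
    refine ⟨by simpa using add_mem_cofinalFIN hV hV', ?_, by rw [add_assoc, hV'U]⟩
    rw [map_tetris_add hV'.2, hVW, hV'W, hWW]
  obtain ⟨V, ⟨hV, hVW, hVU⟩, hVV⟩ := exists_idempotent_in_compact_add_subsemigroup
    Ultrafilter.continuous_add_left S hS_ne hS.isCompact hS_add
  exact ⟨V, hV, hVW, hVU, hVV⟩

/-- `V` absorbs the lower levels only on the right; prepending `U K` makes the new top absorb
them on the left as well. -/
lemma succ (hU : IsTetrisChain K U) {V : Ultrafilter (ℕ →₀ ℕ)} (hV : V ∈ cofinalFIN (K + 1))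
    (hVW : V.map Tetris = U K) (hVU : V + U K = V) (hVV : V + V = V) :
    IsTetrisChain (K + 1) fun j => if j ≤ K then U j else U K + V := by
  have absorb : ∀ i ≤ K, U i + U K = U K := fun i hi => by
    simpa [hi] using hU.add_eq i hi K le_rfl
  have absorb' : ∀ i ≤ K, U K + U i = U K := fun i hi => by
    simpa [hi] using hU.add_eq K le_rfl i hi
  have hVUi : ∀ i ≤ K, V + U i = V := fun i hi => by
    rw [← hVU, add_assoc, absorb' i hi]
  refine ⟨fun j hj => ?_, fun j hj => ?_, fun i hi j hj => ?_⟩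
  · split_ifs with hjK
    · exact hU.mem j hjK
    · simpa [show j = K + 1 by omega] using add_mem_cofinalFIN (hU.mem K le_rfl) hV
  · rw [if_pos (show j - 1 ≤ K by omega)]
    by_cases hjK : j ≤ K
    · rw [if_pos hjK, hU.map_tetris j hjK]
    · rw [if_neg hjK, show j - 1 = K by omega, map_tetris_add hV.2, hVW,
        hU.map_tetris K le_rfl, absorb _ (Nat.sub_le K 1)]
  · by_cases hiK : i ≤ K <;> by_cases hjK : j ≤ K
    · simp only [hiK, hjK, max_le_iff, and_self, if_true]
      exact hU.add_eq i hiK j hjK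
    · simp only [hiK, hjK, max_le_iff, and_false, if_true, if_false]
      rw [← add_assoc, absorb i hiK]
    · simp only [hiK, hjK, max_le_iff, false_and, if_true, if_false]
      rw [add_assoc, hVUi j hjK]
    · simp only [hiK, hjK, max_le_iff, and_self, if_false]
      rw [add_assoc, ← add_assoc V, hVU, hVV]

end IsTetrisChain

lemma exists_isTetrisChain (K : ℕ) : ∃ U, IsTetrisChain K U := by
  induction K with
  | zero =>
    refine ⟨fun _ => pure 0, fun j hj => ?_, fun _ _ => ?_, fun _ _ _ _ => ?_⟩
    · rw [Nat.le_zero.1 hj]; exact pure_zero_mem_cofinalFIN_zero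
    · rw [Ultrafilter.map_pure, Tetris, Finsupp.mapRange_zero]
    · exact Ultrafilter.coe_inj.mp <| Filter.ext' fun p => by simp [Ultrafilter.eventually_add]
  | succ K ih =>
    obtain ⟨U, hU⟩ := ih
    obtain ⟨V, hV, hVW, hVU, hVV⟩ := hU.exists_idempotent_map_tetris_eq
    exact ⟨_, hU.succ hV hVW hVU hVV⟩

/-- `Extendable U K P j g m`: however `j` further summands are drawn, each typical for some
`U ℓ` with `ℓ ≤ K`, the resulting sum and maximal level satisfy `P`. -/
def Extendable (U : ℕ → Ultrafilter (ℕ →₀ ℕ)) (K : ℕ) (P : (ℕ →₀ ℕ) → ℕ → Prop) :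
    ℕ → (ℕ →₀ ℕ) → ℕ → Prop
  | 0, g, m => P g m
  | j + 1, g, m => ∀ ℓ ≤ K, ∀ᶠ x in U ℓ, Extendable U K P j (g + x) (max m ℓ)

/-- The pairs `(∑ i < n, T^[K - s i] (h i), max_{i < n} s i)` with all `s i ≤ K`. -/
noncomputable def tetrisSums (K : ℕ) (h : ℕ → ℕ →₀ ℕ) : ℕ → Finset ((ℕ →₀ ℕ) × ℕ)
  | 0 => {(0, 0)}
  | n + 1 => (tetrisSums K h n ×ˢ range (K + 1)).image
      fun q => (q.1.1 + Tetris^[K - q.2] (h n), max q.1.2 q.2)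

lemma tetrisSums_congr {K n : ℕ} {h h' : ℕ → ℕ →₀ ℕ} (hh : ∀ i < n, h i = h' i) :
    tetrisSums K h n = tetrisSums K h' n := by
  induction n with
  | zero => rfl
  | succ n ih =>
    rw [tetrisSums, tetrisSums, ih fun i hi => hh i (by omega), hh n n.lt_succ_self]

lemma sum_mem_tetrisSums {K n : ℕ} (h : ℕ → ℕ →₀ ℕ) {s : ℕ → ℕ} (hs : ∀ i < n, s i ≤ K) :
    (∑ i ∈ range n, Tetris^[K - s i] (h i), (range n).sup s) ∈ tetrisSums K h n := by
  induction n with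
  | zero => simp [tetrisSums]
  | succ n ih =>
    rw [tetrisSums, sum_range_succ, show (range (n + 1)).sup s = max ((range n).sup s) (s n) by
      rw [range_add_one, sup_insert, max_comm]]
    exact mem_image.2 ⟨(_, s n), mem_product.2 ⟨ih fun i hi => hs i (by omega),
      mem_range.2 (Nat.lt_succ_of_le (hs n n.lt_succ_self))⟩, rfl⟩

lemma isBlockSeqFin_update {n : ℕ} {h : ℕ → ℕ →₀ ℕ} (hh : IsBlockSeqFin n h) {y : ℕ →₀ ℕ}
    (hy : ∀ i < n, Blk (h i) y) : IsBlockSeqFin (n + 1) (Function.update h n y) := by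
  intro i j hij hj
  rw [Function.update_of_ne (by omega : i ≠ n)]
  rcases (by omega : j < n ∨ j = n) with hjn | rfl
  · rw [Function.update_of_ne hjn.ne]
    exact hh i j hij hjn
  · rw [Function.update_self]
    exact hy i hij

lemma IsBlockSeqFin.apply_eq_zero {N : ℕ} {h : ℕ → ℕ →₀ ℕ} (hh : IsBlockSeqFin N h) {i j x : ℕ}
    (hi : i < N) (hj : j < N) (hij : i ≠ j) (hx : h j x ≠ 0) : h i x = 0 := by
  by_contra! hix
  rw [← Finsupp.mem_support_iff] at hx hix
  rcases hij.lt_or_gt with hlt | hlt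
  · exact lt_irrefl x (hh i j hlt hj x hix x hx)
  · exact lt_irrefl x (hh j i hlt hi x hx x hix)

lemma sup_eq_of_isFINk_sum {K N : ℕ} {h : ℕ → ℕ →₀ ℕ} (hK : ∀ i < N, IsFINk K (h i))
    (hh : IsBlockSeqFin N h) {s : ℕ → ℕ} (hs : ∀ i < N, s i ≤ K)
    (hsum : IsFINk K (∑ i ∈ range N, Tetris^[K - s i] (h i))) : (range N).sup s = K := by
  refine le_antisymm (Finset.sup_le fun i hi => hs i (mem_range.1 hi)) ?_
  obtain ⟨x, hx⟩ := hsum.2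
  rw [Finsupp.finsetSum_apply] at hx
  rcases eq_or_ne K 0 with hK0 | hK0
  · exact hK0 ▸ Nat.zero_le _
  obtain ⟨i, hi, hix⟩ := Finset.exists_ne_zero_of_sum_ne_zero (hx.trans_ne hK0)
  have hiN := mem_range.1 hi
  rw [iterate_tetris_apply] at hix
  rw [Finset.sum_eq_single_of_mem i hi fun j hj hji => by
    rw [iterate_tetris_apply, hh.apply_eq_zero (mem_range.1 hj) hiN hji (by omega), zero_tsub],
    iterate_tetris_apply] at hx
  have := (hK i hiN).1 x
  have := Finset.le_sup (f := s) hi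
  omega

namespace IsTetrisChain

variable {K : ℕ} {U : ℕ → Ultrafilter (ℕ →₀ ℕ)} {P : (ℕ →₀ ℕ) → ℕ → Prop}

lemma eventually_extendable (hU : IsTetrisChain K U) (hP : ∀ m ≤ K, ∀ᶠ g in U m, P g m)
    (j : ℕ) : ∀ m ≤ K, ∀ᶠ g in U m, Extendable U K P j g m := by
  induction j with
  | zero => exact hP
  | succ j ih =>
    intro m hm
    refine (eventually_all_finite (Set.finite_le_nat K)).2 fun ℓ hℓ => ?_
    have := ih (max m ℓ) (max_le hm hℓ)
    rwa [← hU.add_eq m hm ℓ hℓ, Ultrafilter.eventually_add] at this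

/-- Each new block is a `U K`-typical element extending all the finitely many sums so far. -/
lemma exists_blockSeq_extendable (hU : IsTetrisChain K U) (hP : ∀ m ≤ K, ∀ᶠ g in U m, P g m)
    (n : ℕ) : ∀ j, ∃ h : ℕ → ℕ →₀ ℕ, (∀ i < n, IsFINk K (h i)) ∧ IsBlockSeqFin n h ∧
      ∀ p ∈ tetrisSums K h n, Extendable U K P j p.1 p.2 := by
  induction n with
  | zero =>
    intro j
    refine ⟨0, fun i hi => absurd hi i.not_lt_zero, fun i j _ hj => absurd hj j.not_lt_zero, ?_⟩
    have := hU.eventually_extendable hP j 0 K.zero_le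
    rw [hU.zero_eq] at this
    simpa [tetrisSums] using this
  | succ n ih =>
    intro j
    obtain ⟨h, hK, hh, hext⟩ := ih (j + 1)
    obtain ⟨b, hb⟩ := exists_support_subset_range h n
    have hW := hU.mem K le_rfl
    have : ∀ᶠ y in U K, IsFINk K y ∧ (∀ x ∈ y.support, b ≤ x) ∧ ∀ p ∈ tetrisSums K h n,
        ∀ ℓ ≤ K, Extendable U K P j (p.1 + Tetris^[K - ℓ] y) (max p.2 ℓ) := by
      refine hW.1.and ((hW.2 b).and ((eventually_all_finset _).2 fun p hp =>
        (eventually_all_finite (Set.finite_le_nat K)).2 fun ℓ hℓ => ?_))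
      have := hext p hp ℓ hℓ
      rw [← hU.map_iterate_tetris hℓ] at this
      exact this
    obtain ⟨y, hyK, hyb, hy⟩ := this.exists
    refine ⟨Function.update h n y, fun i hi => ?_, isBlockSeqFin_update hh fun i hi => ?_, ?_⟩
    · rcases (by omega : i < n ∨ i = n) with hin | rfl
      · rw [Function.update_of_ne hin.ne]; exact hK i hin
      · rwa [Function.update_self]
    · exact fun x hx z hz => (mem_range.1 (hb i hi hx)).trans_le (hyb z hz)
    · rw [tetrisSums, tetrisSums_congr fun i hi => Function.update_of_ne (by omega : i ≠ n) y h,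
        Function.update_self]
      simp only [mem_image, mem_product, mem_range, Prod.exists]
      rintro _ ⟨g, m, ℓ, ⟨hgm, hℓ⟩, rfl⟩
      exact hy (g, m) hgm ℓ (by omega)

end IsTetrisChain

theorem exists_blockSeq_color_eq_of_level {α : Type*} [Finite α] (K N : ℕ)
    (c : (ℕ →₀ ℕ) → α) : ∃ h : ℕ → ℕ →₀ ℕ, (∀ i < N, IsFINk K (h i)) ∧ IsBlockSeqFin N h ∧
      ∃ E : ℕ → α, ∀ p ∈ tetrisSums K h N, c p.1 = E p.2 := by
  obtain ⟨U, hU⟩ := exists_isTetrisChain K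
  choose E hE using fun m => (U m).exists_eventually_eq c
  obtain ⟨h, hK, hh, hext⟩ := hU.exists_blockSeq_extendable (fun m _ => hE m) N 0
  exact ⟨h, hK, hh, E, hext⟩

theorem exists_bound_blockSeq_color_eq_of_level (α : Type*) [Finite α] (K N : ℕ) :
    ∃ Nbar, ∀ c : (ℕ →₀ ℕ) → α, ∃ h : ℕ → ℕ →₀ ℕ, (∀ i < N, h i ∈ FINkN K Nbar) ∧
      IsBlockSeqFin N h ∧ ∃ E : ℕ → α, ∀ p ∈ tetrisSums K h N, c p.1 = E p.2 := by
  by_contra! hbad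
  choose cs hcs using hbad
  choose c hc using fun f => (hyperfilter ℕ).exists_eventually_eq fun n => cs n f
  obtain ⟨h, hK, hh, E, hE⟩ := exists_blockSeq_color_eq_of_level K N c
  obtain ⟨b, hb⟩ := exists_support_subset_range h N
  have hbn : ∀ᶠ n in hyperfilter ℕ, b ≤ n := Nat.hyperfilter_le_atTop (eventually_ge_atTop b)
  obtain ⟨n, hbn, hn⟩ :=
    (hbn.and ((eventually_all_finset (tetrisSums K h N)).2 fun p _ => hc p.1)).exists
  obtain ⟨p, hp, hne⟩ := hcs n h
    (fun i hi => ⟨hK i hi, fun x hx => (mem_range.1 (hb i hi hx)).trans_le hbn⟩) hh E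
  exact hne (by rw [hn p hp, hE p hp])

theorem FINk_support_determined_general (k N r : ℕ) :
    ∃ Nbar : ℕ, ∀ c : (ℕ →₀ ℕ) → Fin r,
      ∃ h : ℕ → (ℕ →₀ ℕ),
        (∀ i < N, h i ∈ FINkN (k + 1) Nbar) ∧ IsBlockSeqFin N h ∧
        ∀ s t : ℕ → ℕ,
          (∀ i < N, s i ≤ k + 1) → (∀ i < N, t i ≤ k + 1) →
          (∀ i < N, s i = k + 1 ↔ t i = k + 1) →
          IsFINk (k + 1) (∑ i ∈ Finset.range N, Tetris^[k + 1 - s i] (h i)) →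
          IsFINk (k + 1) (∑ i ∈ Finset.range N, Tetris^[k + 1 - t i] (h i)) →
          c (∑ i ∈ Finset.range N, Tetris^[k + 1 - s i] (h i)) =
            c (∑ i ∈ Finset.range N, Tetris^[k + 1 - t i] (h i)) := by
  obtain ⟨Nbar, hNbar⟩ := exists_bound_blockSeq_color_eq_of_level (Fin r) (k + 1) N
  refine ⟨Nbar, fun c => ?_⟩
  obtain ⟨h, hFIN, hh, E, hE⟩ := hNbar c
  have color_eq : ∀ s : ℕ → ℕ, (∀ i < N, s i ≤ k + 1) →
      IsFINk (k + 1) (∑ i ∈ range N, Tetris^[k + 1 - s i] (h i)) →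
      c (∑ i ∈ range N, Tetris^[k + 1 - s i] (h i)) = E (k + 1) := fun s hs hsum => by
    have := hE _ (sum_mem_tetrisSums h hs)
    rwa [sup_eq_of_isFINk_sum (fun i hi => (hFIN i hi).1) hh hs hsum] at this
  exact ⟨h, hFIN, hh, fun s t hs ht _ hfs hft => (color_eq s hs hfs).trans (color_eq t ht hft).symm⟩

/-- For all `k ≥ 1`, `N`, `r ≥ 1` there is `N̄` such that for every `r`-coloring of
`FIN_{k+1}(N̄)` there is a block sequence `(h_i)_{i<N}` in `FIN_{k+1}(N̄)` such that the color
of any element `Σ_{i<N} T^{k+1-s_i}(h_i)` of `FIN_{k+1}` depends only on the set of `i < N`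
with `s_i = k+1`. -/
theorem FINk_support_determined (k N r : ℕ) (hk : 1 ≤ k) (hr : 1 ≤ r) :
    ∃ Nbar : ℕ, ∀ c : (ℕ →₀ ℕ) → Fin r,
      ∃ h : ℕ → (ℕ →₀ ℕ),
        (∀ i < N, h i ∈ FINkN (k + 1) Nbar) ∧ IsBlockSeqFin N h ∧
        ∀ s t : ℕ → ℕ,
          (∀ i < N, s i ≤ k + 1) → (∀ i < N, t i ≤ k + 1) →
          (∀ i < N, s i = k + 1 ↔ t i = k + 1) →
          IsFINk (k + 1) (∑ i ∈ Finset.range N, Tetris^[k + 1 - s i] (h i)) →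
          IsFINk (k + 1) (∑ i ∈ Finset.range N, Tetris^[k + 1 - t i] (h i)) →
          c (∑ i ∈ Finset.range N, Tetris^[k + 1 - s i] (h i)) =
            c (∑ i ∈ Finset.range N, Tetris^[k + 1 - t i] (h i)) :=
  FINk_support_determined_general k N r
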